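/- arXiv:1912.03020 — 4 statements merged into one kernel-verified Lean document; each statement's English description precedes it below -/
import Mathlib

section
/- Let x = [x_{ij}] ∈ M_n(M_k) and y = [y_{ij}] ∈ M_n(M_k) both be positive semidefinite. Then Σ_{i,j=1}^n x_{ij} ⊗ y_{ji}^t is a positive semidefinite element of M_k ⊗ M_k. -/
/-!
The matrix `∑ᵢⱼ xᵢⱼ ⊗ yⱼᵢᵀ` is a compression `Vᴴ (x ⊗ yᵀ) V` of the Kronecker product of `x` with
the transpose of `y`, where `V` sends `e_a ⊗ e_c` to `∑ᵢ (eᵢ ⊗ e_a) ⊗ (eᵢ ⊗ e_c)`. Kronecker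
products and transposes of positive semidefinite matrices are positive semidefinite, and so are
their compressions.
-/

open Matrix Kronecker ComplexOrder

namespace Matrix

variable {ι κ R : Type*} [Fintype ι] [DecidableEq ι] [Fintype κ] [DecidableEq κ]

def diagonalPairing (ι κ R : Type*) [DecidableEq ι] [DecidableEq κ] [Zero R] [One R] :
    Matrix ((ι × κ) × (ι × κ)) (κ × κ) R :=
  of fun p q => if p.1.1 = p.2.1 ∧ (p.1.2, p.2.2) = q then 1 else 0

theorem sum_kronecker_transpose_blocks_eq [CommSemiring R] [StarRing R]
    (x y : Matrix (ι × κ) (ι × κ) R) :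
    ∑ i, ∑ j, (of fun a b => x (i, a) (j, b)) ⊗ₖ (of fun a b => y (j, a) (i, b))ᵀ =
      (diagonalPairing ι κ R)ᴴ * (x ⊗ₖ yᵀ) * diagonalPairing ι κ R := by
  ext ⟨a, c⟩ ⟨b, d⟩
  simp only [sum_apply, kroneckerMap_apply, transpose_apply, of_apply, mul_apply,
    conjTranspose_apply, diagonalPairing, Fintype.sum_prod_type]
  simp only [Prod.mk.injEq, ite_and, apply_ite, star_one, star_zero, ite_mul, one_mul, zero_mul,
    mul_one, mul_zero, Finset.sum_ite_irrel, Finset.sum_ite_eq, Finset.sum_ite_eq', Finset.mem_univ,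
    if_true, Finset.sum_const_zero]
  exact Finset.sum_comm

end Matrix

/-- Let `x = [x_{ij}]` and `y = [y_{ij}]` in `M_n(M_k)` (modeled as matrices indexed by
`Fin n × Fin k`, the `(i,j)` block being `(a, b) ↦ x (i,a) (j,b)`) both be positive
semidefinite. Then `∑_{i,j} x_{ij} ⊗ y_{ji}ᵀ` is a positive semidefinite element of
`M_k ⊗ M_k`. -/
theorem stmt_7 {n k : ℕ} (x y : Matrix (Fin n × Fin k) (Fin n × Fin k) ℂ)
    (hx : x.PosSemidef) (hy : y.PosSemidef) :
    (∑ i : Fin n, ∑ j : Fin n,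
      (Matrix.of fun a b : Fin k => x (i, a) (j, b)) ⊗ₖ
        (Matrix.of fun a b : Fin k => y (j, a) (i, b))ᵀ).PosSemidef := by
  rw [sum_kronecker_transpose_blocks_eq]
  exact (hx.kronecker hy.transpose).conjTranspose_mul_mul_same _
end

section
/- Let 2 ≤ q < ∞, α ∈ M_n(ℂ), and for i = 1, …, n let ε_{ii} be the matrix unit with 1 in position (i,i) and 0 elsewhere. Then Σ_{i=1}^n ‖α ε_{ii}‖_q^q ≤ ‖α‖_q^q, where ‖·‖_q denotes the Schatten q-norm. -/
open Matrix Kronecker ComplexOrder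

/-- Schatten `p`-norm of a complex `k × k` matrix: `(∑ sᵢ^p)^(1/p)` where `sᵢ` are the
singular values (square roots of the eigenvalues of `aᴴ * a`). -/
noncomputable def sNorm (p : ℝ) {k : ℕ} (a : Matrix (Fin k) (Fin k) ℂ) : ℝ :=
  (∑ i, Real.sqrt ((Matrix.posSemidef_conjTranspose_mul_self a).1.eigenvalues i) ^ p) ^ (1 / p)

/-! Put `A = αᴴ α` and `p = q / 2 ≥ 1`. The Gram matrix of the column `α ε_ii` has trace `A_ii`,
so by superadditivity of `x ↦ x ^ p` on `[0, ∞)` we get `‖α ε_ii‖_q ^ q ≤ A_ii ^ p`. Diagonalising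
`A = U diag(λ) Uᴴ` gives `A_ii = ∑ⱼ |U_ij|² λⱼ`, and `(|U_ij|²)` is doubly stochastic, so Jensen's
inequality yields `∑ᵢ A_ii ^ p ≤ ∑ⱼ λⱼ ^ p = ‖α‖_q ^ q`. -/

theorem Real.sum_rpow_le_rpow_sum {ι : Type*} (s : Finset ι) {f : ι → ℝ}
    (hf : ∀ i ∈ s, 0 ≤ f i) {p : ℝ} (hp : 1 ≤ p) :
    ∑ i ∈ s, f i ^ p ≤ (∑ i ∈ s, f i) ^ p := by
  classical
  induction s using Finset.induction_on with
  | empty => simp [Real.zero_rpow (by linarith : p ≠ 0)]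
  | insert a s ha ih =>
    rw [Finset.forall_mem_insert] at hf
    rw [Finset.sum_insert ha, Finset.sum_insert ha]
    calc f a ^ p + ∑ i ∈ s, f i ^ p ≤ f a ^ p + (∑ i ∈ s, f i) ^ p := by gcongr; exact ih hf.2
      _ ≤ (f a + ∑ i ∈ s, f i) ^ p :=
        Real.add_rpow_le_rpow_add hf.1 (Finset.sum_nonneg hf.2) hp

section

variable {n : Type*} [Fintype n] [DecidableEq n]

theorem ConvexOn.sum_mulVec_le_of_mem_doublyStochastic {s : Set ℝ} {f : ℝ → ℝ}
    (hf : ConvexOn ℝ s f) {M : Matrix n n ℝ} (hM : M ∈ doublyStochastic ℝ n) {x : n → ℝ}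
    (hx : ∀ i, x i ∈ s) : ∑ i, f ((M *ᵥ x) i) ≤ ∑ i, f (x i) :=
  calc ∑ i, f ((M *ᵥ x) i) ≤ ∑ i, (M *ᵥ (f ∘ x)) i :=
        Finset.sum_le_sum fun i _ => hf.map_sum_le (fun _ _ => nonneg_of_mem_doublyStochastic hM)
          (sum_row_of_mem_doublyStochastic hM i) fun j _ => hx j
    _ = ∑ i, f (x i) := sum_mulVec_of_mem_doublyStochastic hM

theorem Matrix.map_normSq_mem_doublyStochastic {U : Matrix n n ℂ}
    (hU : U ∈ unitaryGroup n ℂ) : U.map Complex.normSq ∈ doublyStochastic ℝ n := by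
  refine mem_doublyStochastic_iff_sum.2
    ⟨fun _ _ => Complex.normSq_nonneg _, fun i => ?_, fun j => ?_⟩
  · have := congrArg Complex.re (congrFun₂ (mem_unitaryGroup_iff.1 hU) i i)
    simpa [mul_apply, Complex.mul_conj, Complex.re_sum] using this
  · have := congrArg Complex.re (congrFun₂ (mem_unitaryGroup_iff'.1 hU) j j)
    simpa [mul_apply, mul_comm, Complex.mul_conj, Complex.re_sum] using this

theorem Matrix.IsHermitian.re_diag_eq_mulVec_eigenvalues {A : Matrix n n ℂ} (hA : A.IsHermitian)
    (i : n) :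
    (A i i).re =
      ((hA.eigenvectorUnitary : Matrix n n ℂ).map Complex.normSq *ᵥ hA.eigenvalues) i := by
  conv_lhs => rw [hA.spectral_theorem, Unitary.conjStarAlgAut_apply]
  rw [mul_apply, Complex.re_sum]
  refine Finset.sum_congr rfl fun j _ => ?_
  rw [mul_diagonal, star_apply, Function.comp_apply, mul_right_comm, RCLike.star_def,
    Complex.mul_conj]
  simp

theorem Matrix.IsHermitian.re_trace_eq_sum_eigenvalues {A : Matrix n n ℂ} (hA : A.IsHermitian) :
    A.trace.re = ∑ i, hA.eigenvalues i := by
  simpa using congrArg Complex.re hA.trace_eq_sum_eigenvalues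

theorem ConvexOn.sum_re_diag_le_sum_eigenvalues {s : Set ℝ} {f : ℝ → ℝ} (hf : ConvexOn ℝ s f)
    {A : Matrix n n ℂ} (hA : A.IsHermitian) (hs : ∀ i, hA.eigenvalues i ∈ s) :
    ∑ i, f (A i i).re ≤ ∑ i, f (hA.eigenvalues i) := by
  simp_rw [hA.re_diag_eq_mulVec_eigenvalues]
  exact hf.sum_mulVec_le_of_mem_doublyStochastic
    (map_normSq_mem_doublyStochastic hA.eigenvectorUnitary.2) hs

theorem Matrix.trace_conjTranspose_mul_self_mul_single {R : Type*} [Semiring R] [StarRing R]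
    (a : Matrix n n R) (i : n) :
    ((a * single i i 1)ᴴ * (a * single i i 1)).trace = (aᴴ * a) i i := by
  simp [trace, mul_apply, Matrix.single, apply_ite star, ite_and]

end

theorem sNorm_rpow {k : ℕ} {q : ℝ} (hq : q ≠ 0) (a : Matrix (Fin k) (Fin k) ℂ) :
    sNorm q a ^ q = ∑ i, (posSemidef_conjTranspose_mul_self a).1.eigenvalues i ^ (q / 2) := by
  have hsum : 0 ≤ ∑ i, √((posSemidef_conjTranspose_mul_self a).1.eigenvalues i) ^ q :=
    Finset.sum_nonneg fun i _ => Real.rpow_nonneg (Real.sqrt_nonneg _) _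
  rw [sNorm, ← Real.rpow_mul hsum, one_div_mul_cancel hq, Real.rpow_one]
  refine Finset.sum_congr rfl fun i _ => ?_
  rw [Real.sqrt_eq_rpow,
    ← Real.rpow_mul ((posSemidef_conjTranspose_mul_self a).eigenvalues_nonneg i)]
  ring_nf

theorem sNorm_mul_single_rpow_le {k : ℕ} {q : ℝ} (hq : 2 ≤ q) (a : Matrix (Fin k) (Fin k) ℂ)
    (i : Fin k) : sNorm q (a * single i i 1) ^ q ≤ ((aᴴ * a) i i).re ^ (q / 2) := by
  have hB := posSemidef_conjTranspose_mul_self (a * single i i 1)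
  rw [sNorm_rpow (by linarith), ← trace_conjTranspose_mul_self_mul_single,
    hB.1.re_trace_eq_sum_eigenvalues]
  exact Real.sum_rpow_le_rpow_sum _ (fun j _ => hB.eigenvalues_nonneg j) (by linarith)

/-- Let `2 ≤ q < ∞`, `α ∈ M_n(ℂ)`, and `ε_{ii}` the matrix unit with `1` in position `(i,i)`.
Then `∑_{i=1}^n ‖α ε_{ii}‖_q^q ≤ ‖α‖_q^q`, where `‖·‖_q` is the Schatten `q`-norm. -/
theorem stmt_8 {n : ℕ} (q : ℝ) (hq : 2 ≤ q) (α : Matrix (Fin n) (Fin n) ℂ) :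
    ∑ i : Fin n, sNorm q (α * Matrix.single i i 1) ^ q ≤ sNorm q α ^ q := by
  have hA := posSemidef_conjTranspose_mul_self α
  calc ∑ i, sNorm q (α * single i i 1) ^ q ≤ ∑ i, ((αᴴ * α) i i).re ^ (q / 2) :=
        Finset.sum_le_sum fun i _ => sNorm_mul_single_rpow_le hq α i
    _ ≤ ∑ i, hA.1.eigenvalues i ^ (q / 2) :=
        (convexOn_rpow (by linarith)).sum_re_diag_le_sum_eigenvalues hA.1 hA.eigenvalues_nonneg
    _ = sNorm q α ^ q := (sNorm_rpow (by linarith) α).symm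
end

section
/- Define the block-matrix norm ‖x‖_{p,n} on M_n(M_k) (Haagerup L_p = Schatten class S_p(M_k)) as the infimum of (1/2)(‖f‖_p + ‖g‖_p) over positive semidefinite f, g ∈ M_k with [[f ⊗ 1_n, x],[x*, g ⊗ 1_n]] ≥ 0. Then this norm satisfies the triangle inequality: ‖x + y‖_{p,n} ≤ ‖x‖_{p,n} + ‖y‖_{p,n}. -/
open Matrix Kronecker ComplexOrder

/-- The block-matrix norm `‖x‖_{p,n}` on `M_n(M_k)` (modeled as matrices indexed by
`Fin k × Fin n`): infimum of `(1/2)(‖f‖_p + ‖g‖_p)` over positive semidefinite `f, g ∈ M_k`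
such that `[[f ⊗ 1ₙ, x], [xᴴ, g ⊗ 1ₙ]]` is positive semidefinite. -/
noncomputable def blockNorm (p : ℝ) {k n : ℕ}
    (x : Matrix (Fin k × Fin n) (Fin k × Fin n) ℂ) : ℝ :=
  sInf { r : ℝ | ∃ f g : Matrix (Fin k) (Fin k) ℂ, f.PosSemidef ∧ g.PosSemidef ∧
    (Matrix.fromBlocks (f ⊗ₖ (1 : Matrix (Fin n) (Fin n) ℂ)) x
      xᴴ (g ⊗ₖ (1 : Matrix (Fin n) (Fin n) ℂ))).PosSemidef ∧
    r = (1 / 2) * (sNorm p f + sNorm p g) }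

/-!
If `(f₁, g₁)` certifies `x` and `(f₂, g₂)` certifies `y`, then `(f₁ + f₂, g₁ + g₂)` certifies
`x + y`, because the block matrices simply add. The triangle inequality for `blockNorm` therefore
reduces to that of the Schatten `p`-norm on positive semidefinite matrices. For the latter,
conjugate by a unitary `U` diagonalising `A + B`: the real diagonals `a, b` of `U⋆AU` and `U⋆BU`
add up to the eigenvalues of `A + B`, and `‖a‖_p ≤ ‖A‖_p` by Jensen's inequality along the doubly
stochastic matrix `(|Tᵢⱼ|²)` of a unitary `T`; Minkowski's inequality in `ℓ^p` concludes.
Since `[[c, x], [xᴴ, c]] ≥ 0` for large `c`, no set of certificates is empty, so the infima add.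
-/

namespace Matrix

open Polynomial

variable {𝕜 : Type*} [RCLike 𝕜] {n : Type*} [Fintype n] [DecidableEq n]

lemma IsHermitian.sum_comp_eigenvalues_of_charpoly_eq {A : Matrix n n 𝕜} (hA : A.IsHermitian)
    {d : n → ℝ} (h : A.charpoly = ∏ i, (X - C (d i : 𝕜))) (g : ℝ → ℝ) :
    ∑ i, g (hA.eigenvalues i) = ∑ i, g (d i) := by
  have hroots : Multiset.map ((RCLike.ofReal : ℝ → 𝕜) ∘ hA.eigenvalues) Finset.univ.val
      = Multiset.map (RCLike.ofReal ∘ d) Finset.univ.val := by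
    rw [← hA.roots_charpoly_eq_eigenvalues, h, Polynomial.roots_prod _ _ (by
      simp [Finset.prod_ne_zero_iff, X_sub_C_ne_zero])]
    simp
  simpa only [Multiset.map_map, Function.comp_def, RCLike.ofReal_re, Finset.sum_eq_multiset_sum]
    using congrArg (fun s => (s.map (g ∘ RCLike.re)).sum) hroots

lemma IsHermitian.charpoly_mul_self {A : Matrix n n 𝕜} (hA : A.IsHermitian) :
    (A * A).charpoly = ∏ i, (X - C ((hA.eigenvalues i ^ 2 : ℝ) : 𝕜)) := by
  rw [← sq, ← cfc_pow_id (R := ℝ) A 2 hA.isSelfAdjoint, hA.charpoly_cfc_eq]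

lemma sum_norm_sq_row_of_mem_unitaryGroup {T : Matrix n n 𝕜} (hT : T ∈ unitaryGroup n 𝕜)
    (i : n) : ∑ j, ‖T i j‖ ^ 2 = 1 := by
  have h := congrFun (congrFun (mem_unitaryGroup_iff.mp hT) i) i
  simp only [mul_apply, star_apply, RCLike.star_def, RCLike.mul_conj, one_apply_eq] at h
  exact_mod_cast h

lemma sum_norm_sq_col_of_mem_unitaryGroup {T : Matrix n n 𝕜} (hT : T ∈ unitaryGroup n 𝕜)
    (j : n) : ∑ i, ‖T i j‖ ^ 2 = 1 := by
  simpa [star_apply] using sum_norm_sq_row_of_mem_unitaryGroup (Unitary.star_mem hT) j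

lemma re_mul_diagonal_mul_star_apply_self (T : Matrix n n 𝕜) (d : n → ℝ) (i : n) :
    RCLike.re ((T * diagonal (RCLike.ofReal ∘ d) * star T : Matrix n n 𝕜) i i)
      = ∑ j, ‖T i j‖ ^ 2 * d j := by
  rw [mul_apply, map_sum]
  simp only [mul_diagonal, star_apply, RCLike.star_def, Function.comp_apply]
  refine Finset.sum_congr rfl fun j _ => ?_
  rw [mul_right_comm, RCLike.mul_conj]
  norm_cast

theorem IsHermitian.sum_convexOn_re_diag_conj_le {A : Matrix n n 𝕜} (hA : A.IsHermitian)
    {s : Set ℝ} {f : ℝ → ℝ} (hf : ConvexOn ℝ s f) (hs : ∀ i, hA.eigenvalues i ∈ s)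
    {U : Matrix n n 𝕜} (hU : U ∈ unitaryGroup n 𝕜) :
    ∑ i, f (RCLike.re ((star U * A * U) i i)) ≤ ∑ i, f (hA.eigenvalues i) := by
  set T := star U * (hA.eigenvectorUnitary : Matrix n n 𝕜)
  have hT : T ∈ unitaryGroup n 𝕜 := mul_mem (Unitary.star_mem hU) hA.eigenvectorUnitary.2
  have hconj : star U * A * U = T * diagonal (RCLike.ofReal ∘ hA.eigenvalues) * star T := by
    conv_lhs => rw [hA.spectral_theorem, Unitary.conjStarAlgAut_apply]
    simp only [T, star_mul, star_star, mul_assoc]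
  calc ∑ i, f (RCLike.re ((star U * A * U) i i))
      = ∑ i, f (∑ j, ‖T i j‖ ^ 2 * hA.eigenvalues j) := by
        simp only [hconj, re_mul_diagonal_mul_star_apply_self]
    _ ≤ ∑ i, ∑ j, ‖T i j‖ ^ 2 * f (hA.eigenvalues j) :=
        Finset.sum_le_sum fun i _ => hf.map_sum_le (fun j _ => by positivity)
          (sum_norm_sq_row_of_mem_unitaryGroup hT i) fun j _ => hs j
    _ = ∑ j, f (hA.eigenvalues j) := by
        rw [Finset.sum_comm]
        simp only [← Finset.sum_mul, sum_norm_sq_col_of_mem_unitaryGroup hT, one_mul]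

open scoped MatrixOrder in
lemma IsHermitian.exists_posSemidef_add_smul_one {N : Matrix n n 𝕜} (hN : N.IsHermitian) :
    ∃ c : ℝ, 0 ≤ c ∧ (N + c • 1).PosSemidef := by
  obtain ⟨r, hr⟩ := (finite_real_spectrum (A := N)).bddBelow
  refine ⟨|r|, abs_nonneg r, ?_⟩
  have h : algebraMap ℝ (Matrix n n 𝕜) (-|r|) ≤ N :=
    algebraMap_le_of_le_spectrum (fun x hx => (neg_abs_le r).trans (hr hx)) hN.isSelfAdjoint
  rwa [le_iff, Algebra.algebraMap_eq_smul_one, neg_smul, sub_neg_eq_add] at h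

lemma exists_posSemidef_fromBlocks_smul_one {m l : Type*} [Fintype m] [Fintype l]
    [DecidableEq m] [DecidableEq l] (x : Matrix m l 𝕜) :
    ∃ c : ℝ, 0 ≤ c ∧ (fromBlocks (c • 1) x xᴴ (c • 1)).PosSemidef := by
  have hN : (fromBlocks 0 x xᴴ 0).IsHermitian := by
    simp [IsHermitian, fromBlocks_conjTranspose]
  obtain ⟨c, hc, hpsd⟩ := hN.exists_posSemidef_add_smul_one
  refine ⟨c, hc, ?_⟩
  simpa only [← fromBlocks_one, fromBlocks_smul, fromBlocks_add, smul_zero, zero_add,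
    add_zero] using hpsd

end Matrix

open Matrix

lemma sNorm_of_isHermitian {k : ℕ} (p : ℝ) {A : Matrix (Fin k) (Fin k) ℂ} (hA : A.IsHermitian) :
    sNorm p A = (∑ i, |hA.eigenvalues i| ^ p) ^ (1 / p) := by
  rw [sNorm, (posSemidef_conjTranspose_mul_self A).1.sum_comp_eigenvalues_of_charpoly_eq
    (by rw [hA.eq]; exact hA.charpoly_mul_self) (fun t => √t ^ p)]
  simp only [Real.sqrt_sq_eq_abs]

lemma sNorm_of_posSemidef {k : ℕ} (p : ℝ) {A : Matrix (Fin k) (Fin k) ℂ} (hA : A.PosSemidef) :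
    sNorm p A = (∑ i, hA.1.eigenvalues i ^ p) ^ (1 / p) := by
  simp only [sNorm_of_isHermitian p hA.1, abs_of_nonneg (hA.eigenvalues_nonneg _)]

lemma sNorm_nonneg {k : ℕ} (p : ℝ) (A : Matrix (Fin k) (Fin k) ℂ) : 0 ≤ sNorm p A := by
  unfold sNorm; positivity

theorem sNorm_add_le_of_posSemidef {k : ℕ} {p : ℝ} (hp : 1 ≤ p)
    {A B : Matrix (Fin k) (Fin k) ℂ} (hA : A.PosSemidef) (hB : B.PosSemidef) :
    sNorm p (A + B) ≤ sNorm p A + sNorm p B := by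
  have hAB := hA.add hB
  set U : Matrix (Fin k) (Fin k) ℂ := (hAB.1.eigenvectorUnitary : Matrix (Fin k) (Fin k) ℂ)
  have hU : U ∈ unitaryGroup (Fin k) ℂ := hAB.1.eigenvectorUnitary.2
  let diagConj (C : Matrix (Fin k) (Fin k) ℂ) (i : Fin k) : ℝ := ((star U * C * U) i i).re
  have diagConj_nonneg {C} (hC : C.PosSemidef) (i) : 0 ≤ diagConj C i :=
    (Complex.nonneg_iff.mp (hC.conjTranspose_mul_mul_same U).diag_nonneg).1
  have diagConj_le {C} (hC : C.PosSemidef) :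
      (∑ i, diagConj C i ^ p) ^ (1 / p) ≤ sNorm p C := by
    rw [sNorm_of_posSemidef p hC]
    exact Real.rpow_le_rpow
      (Finset.sum_nonneg fun i _ => Real.rpow_nonneg (diagConj_nonneg hC i) p)
      (hC.1.sum_convexOn_re_diag_conj_le (convexOn_rpow hp) hC.eigenvalues_nonneg hU)
      (by positivity)
  have hdiag : ∀ i, hAB.1.eigenvalues i = diagConj A i + diagConj B i := fun i => by
    have h := congrFun (congrFun hAB.1.conjStarAlgAut_star_eigenvectorUnitary i) i
    simpa [Unitary.conjStarAlgAut_star_apply, diagConj, mul_add, add_mul] using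
      (congrArg Complex.re h).symm
  calc sNorm p (A + B) = (∑ i, (diagConj A i + diagConj B i) ^ p) ^ (1 / p) := by
        simp only [sNorm_of_posSemidef p hAB, hdiag]
    _ ≤ (∑ i, diagConj A i ^ p) ^ (1 / p) + (∑ i, diagConj B i ^ p) ^ (1 / p) :=
        Real.Lp_add_le_of_nonneg _ hp (fun i _ => diagConj_nonneg hA i)
          fun i _ => diagConj_nonneg hB i
    _ ≤ sNorm p A + sNorm p B := add_le_add (diagConj_le hA) (diagConj_le hB)

def blockNormCandidates (p : ℝ) {k n : ℕ} (x : Matrix (Fin k × Fin n) (Fin k × Fin n) ℂ) :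
    Set ℝ :=
  { r : ℝ | ∃ f g : Matrix (Fin k) (Fin k) ℂ, f.PosSemidef ∧ g.PosSemidef ∧
    (Matrix.fromBlocks (f ⊗ₖ (1 : Matrix (Fin n) (Fin n) ℂ)) x
      xᴴ (g ⊗ₖ (1 : Matrix (Fin n) (Fin n) ℂ))).PosSemidef ∧
    r = (1 / 2) * (sNorm p f + sNorm p g) }

section blockNormCandidates

variable {p : ℝ} {k n : ℕ}

lemma blockNorm_eq_sInf (x : Matrix (Fin k × Fin n) (Fin k × Fin n) ℂ) :
    blockNorm p x = sInf (blockNormCandidates p x) := rfl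

lemma blockNormCandidates_nonempty (x : Matrix (Fin k × Fin n) (Fin k × Fin n) ℂ) :
    (blockNormCandidates p x).Nonempty := by
  obtain ⟨c, hc, hblock⟩ := exists_posSemidef_fromBlocks_smul_one x
  have hf : (c • 1 : Matrix (Fin k) (Fin k) ℂ).PosSemidef := PosSemidef.one.smul hc
  refine ⟨_, c • 1, c • 1, hf, hf, ?_, rfl⟩
  simpa only [smul_kronecker, one_kronecker_one] using hblock

lemma bddBelow_blockNormCandidates (x : Matrix (Fin k × Fin n) (Fin k × Fin n) ℂ) :
    BddBelow (blockNormCandidates p x) := by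
  refine ⟨0, ?_⟩
  rintro _ ⟨f, g, -, -, -, rfl⟩
  have := sNorm_nonneg p f
  have := sNorm_nonneg p g
  positivity

lemma exists_mem_blockNormCandidates_add_le (hp : 1 ≤ p)
    {x y : Matrix (Fin k × Fin n) (Fin k × Fin n) ℂ} {a b : ℝ}
    (ha : a ∈ blockNormCandidates p x) (hb : b ∈ blockNormCandidates p y) :
    ∃ s ∈ blockNormCandidates p (x + y), s ≤ a + b := by
  obtain ⟨f₁, g₁, hf₁, hg₁, hx, rfl⟩ := ha
  obtain ⟨f₂, g₂, hf₂, hg₂, hy, rfl⟩ := hb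
  refine ⟨_, ⟨f₁ + f₂, g₁ + g₂, hf₁.add hf₂, hg₁.add hg₂, ?_, rfl⟩, ?_⟩
  · simpa only [fromBlocks_add, add_kronecker, conjTranspose_add] using hx.add hy
  · linarith [sNorm_add_le_of_posSemidef hp hf₁ hf₂, sNorm_add_le_of_posSemidef hp hg₁ hg₂]

end blockNormCandidates

/-- The block-matrix norm `‖·‖_{p,n}` on `M_n(M_k)` satisfies the triangle inequality:
`‖x + y‖_{p,n} ≤ ‖x‖_{p,n} + ‖y‖_{p,n}`. -/
theorem stmt_10 {k n : ℕ} (p : ℝ) (hp : 1 ≤ p)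
    (x y : Matrix (Fin k × Fin n) (Fin k × Fin n) ℂ) :
    blockNorm p (x + y) ≤ blockNorm p x + blockNorm p y := by
  simp only [blockNorm_eq_sInf]
  rw [← csInf_add (blockNormCandidates_nonempty x) (bddBelow_blockNormCandidates x)
    (blockNormCandidates_nonempty y) (bddBelow_blockNormCandidates y)]
  refine le_csInf ((blockNormCandidates_nonempty x).add (blockNormCandidates_nonempty y)) ?_
  rintro _ ⟨a, ha, b, hb, rfl⟩
  obtain ⟨s, hs, hsab⟩ := exists_mem_blockNormCandidates_add_le hp ha hb
  exact (csInf_le (bddBelow_blockNormCandidates _) hs).trans hsab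
end

section
/- For n ∈ ℕ and 1 ≤ p < ∞, 1 ≤ q < ∞, let T_n : M_n(ℂ) → ℂ^n be the linear map T_n(x) = ( Tr((ε_{1i} + ε_{i1}) x) )_{i=1}^n, where ε_{ij} are matrix units. Let S : M_n(ℂ) → ℂ^n be any linear map such that S + T_n and S − T_n are both completely positive (with ℂ^n as the diagonal subalgebra ℓ_∞^n, and the ℓ_q norm on the target). Then the operator norm of S from the Schatten p-class S_p(M_n) to ℓ_q^n satisfies ‖S‖ ≥ n^{1/(2q)}. -/
open Matrix Kronecker ComplexOrder

/-- A linear map `Φ : M_N(ℂ) → ℂ^N` (with `ℂ^N` viewed as the diagonal subalgebra `ℓ_∞^N`)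
is completely positive if every amplification `Φ ⊗ id_{M_m}` preserves positivity: for every
positive semidefinite `x ∈ M_m(M_N)` (modeled with index type `Fin m × Fin N`, the `(i,j)`
block being `(a,b) ↦ x (i,a) (j,b)`) and every coordinate `t`, the `m × m` matrix
`[Φ(x_{ij}) t]` is positive semidefinite. -/
def IsCompletelyPositive {N : ℕ}
    (Φ : Matrix (Fin N) (Fin N) ℂ →ₗ[ℂ] (Fin N → ℂ)) : Prop :=
  ∀ (m : ℕ) (x : Matrix (Fin m × Fin N) (Fin m × Fin N) ℂ), x.PosSemidef →
    ∀ t : Fin N,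
      (Matrix.of fun i j : Fin m =>
        Φ (Matrix.of fun a b : Fin N => x (i, a) (j, b)) t).PosSemidef

/-! Let `z` be the first index, `βₜ = Re S(ε_zz)ₜ` and `γₜ = Re S(ε_tt)ₜ`. Positivity of
`S ± T` gives `|Re T(x)ₜ| ≤ Re S(x)ₜ` for every positive `x`. On `ε_zz` this yields `β_z ≥ 2`.
For `t ≠ z`, the positive matrices `w w*` with `w = c e_z ± e_t` add up to `2c² ε_zz + 2 ε_tt`
while `T` takes the values `±2c` on them, so `2c ≤ c² βₜ + γₜ` for every real `c`; a
nonpositive discriminant then gives `βₜ γₜ ≥ 1`. Every `ε_tt` has Schatten norm `1`, so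
`γₜ ≤ C` and `‖β‖_q ≤ C`. Hence `βₜ ≥ 1/C`, and so `N^{1/q} / C ≤ ‖β‖_q ≤ C`. -/

theorem one_le_mul_of_forall_two_mul_le {β γ : ℝ} (h : ∀ c : ℝ, 2 * c ≤ β * c ^ 2 + γ) :
    1 ≤ β * γ := by
  have := discrim_le_zero (a := β) (b := -2) (c := γ) fun c => by nlinarith [h c]
  rw [discrim] at this
  linarith

section LqNorm

variable {ι : Type*} [Fintype ι] {q : ℝ}

theorem le_rpow_sum_rpow_one_div (hq : 0 < q) {f : ι → ℝ} (hf : ∀ i, 0 ≤ f i) (i : ι) :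
    f i ≤ (∑ j, f j ^ q) ^ (1 / q) :=
  calc f i = (f i ^ q) ^ (1 / q) := by
        rw [← Real.rpow_mul (hf i), mul_one_div_cancel hq.ne', Real.rpow_one]
    _ ≤ (∑ j, f j ^ q) ^ (1 / q) := by
      gcongr
      · exact Real.rpow_nonneg (hf i) q
      · exact Finset.single_le_sum (fun j _ => Real.rpow_nonneg (hf j) q) (Finset.mem_univ i)

theorem rpow_sum_rpow_one_div_le (hq : 0 < q) {f g : ι → ℝ} (hf : ∀ i, 0 ≤ f i)
    (hfg : ∀ i, f i ≤ g i) : (∑ i, f i ^ q) ^ (1 / q) ≤ (∑ i, g i ^ q) ^ (1 / q) :=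
  Real.rpow_le_rpow (Finset.sum_nonneg fun i _ => Real.rpow_nonneg (hf i) q)
    (Finset.sum_le_sum fun i _ => Real.rpow_le_rpow (hf i) (hfg i) hq.le) (by positivity)

theorem card_rpow_one_div_two_mul_le [Nonempty ι] (hq : 0 < q) {β γ : ι → ℝ} {C : ℝ}
    (hβ : ∀ i, 0 ≤ β i) (hβγ : ∀ i, 1 ≤ β i * γ i) (hγC : ∀ i, γ i ≤ C)
    (hβC : (∑ i, β i ^ q) ^ (1 / q) ≤ C) :
    (Fintype.card ι : ℝ) ^ (1 / (2 * q)) ≤ C := by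
  have hβC_ge (i : ι) : 1 ≤ β i * C := by
    nlinarith [hβγ i, mul_le_mul_of_nonneg_left (hγC i) (hβ i)]
  obtain ⟨i₀⟩ := ‹Nonempty ι›
  have hC : 0 < C := by nlinarith [hβC_ge i₀, hβ i₀]
  have hβ_ge (i : ι) : C⁻¹ ≤ β i := by
    rw [inv_le_iff_one_le_mul₀ hC]
    linarith [hβC_ge i]
  have hcard : (Fintype.card ι : ℝ) ^ (1 / q) * C⁻¹ ≤ C :=
    calc (Fintype.card ι : ℝ) ^ (1 / q) * C⁻¹ = (∑ _i : ι, C⁻¹ ^ q) ^ (1 / q) := by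
          rw [Finset.sum_const, Finset.card_univ, nsmul_eq_mul,
            Real.mul_rpow (by positivity) (by positivity), ← Real.rpow_mul (by positivity),
            mul_one_div_cancel hq.ne', Real.rpow_one]
      _ ≤ (∑ i, β i ^ q) ^ (1 / q) := rpow_sum_rpow_one_div_le hq (fun _ => by positivity) hβ_ge
      _ ≤ C := hβC
  have hcard_sq : (Fintype.card ι : ℝ) ^ (1 / q) ≤ C ^ 2 := by
    rwa [← div_eq_mul_inv, div_le_iff₀ hC, ← sq] at hcard
  calc (Fintype.card ι : ℝ) ^ (1 / (2 * q))
      = ((Fintype.card ι : ℝ) ^ (1 / q)) ^ (1 / 2 : ℝ) := by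
        rw [← Real.rpow_mul (by positivity)]
        ring_nf
    _ ≤ (C ^ 2) ^ (1 / 2 : ℝ) := by gcongr
    _ = C := by rw [← Real.sqrt_eq_rpow, Real.sqrt_sq hC.le]

end LqNorm

theorem Matrix.IsHermitian.eigenvalues_mem_zero_one {n : Type*} [Fintype n] [DecidableEq n]
    {A : Matrix n n ℂ} (hA : A.IsHermitian) (hAA : IsIdempotentElem A) (i : n) :
    hA.eigenvalues i ∈ ({0, 1} : Set ℝ) :=
  hAA.spectrum_subset ℝ (hA.eigenvalues_mem_spectrum_real i)

theorem Matrix.IsHermitian.sum_sqrt_eigenvalues_rpow {n : Type*} [Fintype n] [DecidableEq n]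
    {A : Matrix n n ℂ} (hA : A.IsHermitian) (hAA : IsIdempotentElem A) {p : ℝ} (hp : p ≠ 0) :
    ∑ i, √(hA.eigenvalues i) ^ p = A.trace.re := by
  rw [hA.trace_eq_sum_eigenvalues, Complex.re_sum]
  refine Finset.sum_congr rfl fun i _ => ?_
  obtain h | h : hA.eigenvalues i = 0 ∨ hA.eigenvalues i = 1 := hA.eigenvalues_mem_zero_one hAA i
  all_goals simp [h, hp]

theorem sNorm_single_self {k : ℕ} (p : ℝ) (t : Fin k) : sNorm p (single t t (1 : ℂ)) = 1 := by
  have hE : (single t t (1 : ℂ))ᴴ * single t t 1 = single t t 1 := by simp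
  rcases eq_or_ne p 0 with rfl | hp
  · -- the outer exponent is `1 / 0 = 0`
    simp [sNorm]
  rw [sNorm, IsHermitian.sum_sqrt_eigenvalues_rpow _ _ hp, hE]
  · simp
  · rw [IsIdempotentElem, hE]
    simp

theorem posSemidef_single_self {n : Type*} [Fintype n] [DecidableEq n] (t : n) :
    (single t t (1 : ℂ)).PosSemidef := by
  simpa [← single_eq_single_vecMulVec_single] using
    posSemidef_vecMulVec_self_star (Pi.single t (1 : ℂ))

theorem vecMulVec_single_star_single {n : Type*} [DecidableEq n] (i : n) (a : ℂ) :
    vecMulVec (Pi.single i a) (star (Pi.single i a)) = (a * star a) • single i i 1 := by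
  ext k l
  simp only [vecMulVec_apply, Pi.star_apply, Pi.single_apply, single_apply, Matrix.smul_apply,
    smul_eq_mul]
  split_ifs <;> simp <;> grind

theorem vecMulVec_add_vecMulVec_sub {n R : Type*} [CommRing R] [StarRing R] (u v : n → R) :
    vecMulVec (u + v) (star (u + v)) + vecMulVec (u - v) (star (u - v)) =
      (2 : R) • (vecMulVec u (star u) + vecMulVec v (star v)) := by
  ext a b
  simp only [Matrix.add_apply, Matrix.smul_apply, vecMulVec_apply, Pi.add_apply, Pi.sub_apply,
    Pi.star_apply, star_add, star_sub, smul_eq_mul]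
  ring

section CompletelyPositive

variable {N : ℕ} {S T : Matrix (Fin N) (Fin N) ℂ →ₗ[ℂ] (Fin N → ℂ)}

theorem IsCompletelyPositive.nonneg_apply {Φ : Matrix (Fin N) (Fin N) ℂ →ₗ[ℂ] (Fin N → ℂ)}
    (hΦ : IsCompletelyPositive Φ) {x : Matrix (Fin N) (Fin N) ℂ} (hx : x.PosSemidef)
    (t : Fin N) : 0 ≤ Φ x t :=
  -- amplify by `m = 1`, viewing `x` as a `1 × 1` block matrix
  (hΦ 1 _ (hx.submatrix Prod.snd) t).diag_nonneg (i := 0)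

theorem abs_re_apply_le_re_apply (hSpT : IsCompletelyPositive (S + T))
    (hSmT : IsCompletelyPositive (S - T)) {x : Matrix (Fin N) (Fin N) ℂ} (hx : x.PosSemidef)
    (t : Fin N) : |(T x t).re| ≤ (S x t).re := by
  have hp := (Complex.nonneg_iff.1 (hSpT.nonneg_apply hx t)).1
  have hm := (Complex.nonneg_iff.1 (hSmT.nonneg_apply hx t)).1
  simp only [LinearMap.add_apply, LinearMap.sub_apply, Pi.add_apply, Pi.sub_apply,
    Complex.add_re, Complex.sub_re] at hp hm
  exact abs_le.2 ⟨by linarith, by linarith⟩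

theorem one_le_re_single_mul_re_single {z t : Fin N} (htz : t ≠ z)
    (hT : ∀ x, T x t = x t z + x z t)
    (hST : ∀ x : Matrix (Fin N) (Fin N) ℂ, x.PosSemidef → |(T x t).re| ≤ (S x t).re) :
    1 ≤ (S (single z z 1) t).re * (S (single t t 1) t).re := by
  refine one_le_mul_of_forall_two_mul_le fun c => ?_
  let u : Fin N → ℂ := Pi.single z (c : ℂ)
  let v : Fin N → ℂ := Pi.single t 1
  have hT_add : T (vecMulVec (u + v) (star (u + v))) t = 2 * c := by
    simp [u, v, hT, vecMulVec_apply, htz, htz.symm]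
    ring
  have hT_sub : T (vecMulVec (u - v) (star (u - v))) t = -(2 * c) := by
    simp [u, v, hT, vecMulVec_apply, htz, htz.symm]
    ring
  have hu : vecMulVec u (star u) = ((c ^ 2 : ℝ) : ℂ) • single z z 1 := by
    rw [vecMulVec_single_star_single, Complex.star_def, Complex.conj_ofReal, ← Complex.ofReal_mul,
      sq]
  have hv : vecMulVec v (star v) = single t t 1 := by
    rw [vecMulVec_single_star_single, star_one, mul_one, one_smul]
  have h_add := hST _ (posSemidef_vecMulVec_self_star (u + v))
  have h_sub := hST _ (posSemidef_vecMulVec_self_star (u - v))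
  rw [hT_add] at h_add
  rw [hT_sub] at h_sub
  have h_sum := congrArg (fun y => (S y t).re) (vecMulVec_add_vecMulVec_sub u v)
  rw [hu, hv] at h_sum
  simp only [map_add, map_smul, Pi.add_apply, Pi.smul_apply, smul_eq_mul] at h_sum
  norm_num [← Complex.ofReal_pow] at h_add h_sum h_sub
  linarith [le_abs_self c]

end CompletelyPositive

theorem stmt_18_general {N : ℕ} (hN : 0 < N) (p q : ℝ) (hq : 1 ≤ q)
    (T S : Matrix (Fin N) (Fin N) ℂ →ₗ[ℂ] (Fin N → ℂ))
    (hT : ∀ (x : Matrix (Fin N) (Fin N) ℂ) (i : Fin N),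
      T x i = Matrix.trace
        ((Matrix.single (⟨0, hN⟩ : Fin N) i 1 +
          Matrix.single i (⟨0, hN⟩ : Fin N) 1) * x))
    (hSpT : IsCompletelyPositive (S + T))
    (hSmT : IsCompletelyPositive (S - T))
    (C : ℝ)
    (hC : ∀ x : Matrix (Fin N) (Fin N) ℂ,
      (∑ t : Fin N, ‖S x t‖ ^ q) ^ (1 / q) ≤ C * sNorm p x) :
    (N : ℝ) ^ (1 / (2 * q)) ≤ C := by
  set z : Fin N := ⟨0, hN⟩
  have hq₀ : 0 < q := by linarith
  have hT' (x : Matrix (Fin N) (Fin N) ℂ) (t : Fin N) : T x t = x t z + x z t := by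
    simp [hT, add_mul, trace_single_mul, add_comm]
  have hST (x : Matrix (Fin N) (Fin N) ℂ) (hx : x.PosSemidef) (t : Fin N) :
      |(T x t).re| ≤ (S x t).re :=
    abs_re_apply_le_re_apply hSpT hSmT hx t
  have hC_single (t : Fin N) : (∑ s, ‖S (single t t 1) s‖ ^ q) ^ (1 / q) ≤ C := by
    simpa [sNorm_single_self] using hC (single t t 1)
  have hβ (t : Fin N) : 0 ≤ (S (single z z 1) t).re :=
    (abs_nonneg _).trans (hST _ (posSemidef_single_self z) t)
  have hβz : 2 ≤ (S (single z z 1) z).re := by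
    simpa [hT', one_add_one_eq_two] using hST _ (posSemidef_single_self z) z
  have hβγ (t : Fin N) : 1 ≤ (S (single z z 1) t).re * (S (single t t 1) t).re := by
    rcases eq_or_ne t z with rfl | htz
    · nlinarith
    · exact one_le_re_single_mul_re_single htz (hT' · t) (hST · · t)
  have hγC (t : Fin N) : (S (single t t 1) t).re ≤ C :=
    calc (S (single t t 1) t).re ≤ ‖S (single t t 1) t‖ := Complex.re_le_norm _
      _ ≤ (∑ s, ‖S (single t t 1) s‖ ^ q) ^ (1 / q) :=
        le_rpow_sum_rpow_one_div hq₀ (fun _ => norm_nonneg _) t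
      _ ≤ C := hC_single t
  have hβC : (∑ t, (S (single z z 1) t).re ^ q) ^ (1 / q) ≤ C :=
    (rpow_sum_rpow_one_div_le hq₀ hβ fun t => Complex.re_le_norm _).trans (hC_single z)
  have : Nonempty (Fin N) := ⟨z⟩
  simpa using card_rpow_one_div_two_mul_le hq₀ hβ hβγ hγC hβC

/-- Let `T : M_N(ℂ) → ℂ^N` be `T(x)_i = Tr((ε_{1i} + ε_{i1}) x)` and let `S` be a linear
map such that `S + T` and `S - T` are completely positive. Then any bound `C` for `S` as an
operator from the Schatten `p`-class to `ℓ_q^N` satisfies `C ≥ N^{1/(2q)}`; that is,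
`‖S‖ ≥ N^{1/(2q)}`. -/
theorem stmt_18 {N : ℕ} (hN : 0 < N) (p q : ℝ) (hp : 1 ≤ p) (hq : 1 ≤ q)
    (T S : Matrix (Fin N) (Fin N) ℂ →ₗ[ℂ] (Fin N → ℂ))
    (hT : ∀ (x : Matrix (Fin N) (Fin N) ℂ) (i : Fin N),
      T x i = Matrix.trace
        ((Matrix.single (⟨0, hN⟩ : Fin N) i 1 +
          Matrix.single i (⟨0, hN⟩ : Fin N) 1) * x))
    (hSpT : IsCompletelyPositive (S + T))
    (hSmT : IsCompletelyPositive (S - T))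
    (C : ℝ)
    (hC : ∀ x : Matrix (Fin N) (Fin N) ℂ,
      (∑ t : Fin N, ‖S x t‖ ^ q) ^ (1 / q) ≤ C * sNorm p x) :
    (N : ℝ) ^ (1 / (2 * q)) ≤ C :=
  stmt_18_general hN p q hq T S hT hSpT hSmT C hC
end
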